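/- For k ∈ ℝ, let u = cos k, ξ = (2u + √(4u² + 1))^{1/3} and s = ξ − 1/ξ. Then: (1) ξ³ − 1/ξ³ = 4u; (2) s is an increasing function of u on [−1,1] with s = −1 at u = −1 and s = 1 at u = 1, so s ∈ [−1,1]; (3) setting λ₀ = (2cos k)/3, λ₁ = (2cos k)/3 + (ξ − 1/ξ)/3, and λ₂ = (2cos k)/3 + (1/6)((−1 + i√3)ξ + (1 + i√3)/ξ), one has λ₀ = s(s²+3)/6, λ₁ = s(s²+5)/6, and λ₂ = s(s²+2)/6 + i(√3/6)√(s²+4); (4) consequently |λ₀| ≤ 2/3 and |λ₂| ≤ √(2/3). -/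

import Mathlib

/-!
Cardano: `ξ³` and `-1/ξ³` are the two roots of `z² - 4uz - 1`, so `ξ³ - 1/ξ³ = 4u`, and
`s = ξ - 1/ξ` is then the unique real root of the cubic `s³ + 3s = 4u`. Since `s ↦ s³ + 3s` is
strictly increasing, `s` is an increasing function of `u` and `s(±1) = ±1`. The eigenvalues are
rewritten through `2u = (s³ + 3s)/2` and `ξ + 1/ξ = √(s² + 4)`, and `|λ₂|² = (s²(s²+2)² + 3(s²+4))/36`
is largest at `s² = 1`.
-/

/-- `ξ(u) = (2u + √(4u² + 1))^{1/3}`. -/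
noncomputable def xiFun (u : ℝ) : ℝ := (2 * u + Real.sqrt (4 * u ^ 2 + 1)) ^ ((1 : ℝ) / 3)

/-- `s(u) = ξ(u) - 1/ξ(u)`. -/
noncomputable def sFun (u : ℝ) : ℝ := xiFun u - 1 / xiFun u

open Complex

lemma two_mul_add_sqrt_pos (u : ℝ) : 0 < 2 * u + Real.sqrt (4 * u ^ 2 + 1) := by
  have h : |2 * u| < Real.sqrt (4 * u ^ 2 + 1) := by
    rw [← Real.sqrt_sq_eq_abs]
    exact Real.sqrt_lt_sqrt (sq_nonneg _) (by nlinarith)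
  linarith [neg_abs_le (2 * u)]

lemma xiFun_pos (u : ℝ) : 0 < xiFun u := Real.rpow_pos_of_pos (two_mul_add_sqrt_pos u) _

lemma xiFun_pow_three (u : ℝ) : xiFun u ^ 3 = 2 * u + Real.sqrt (4 * u ^ 2 + 1) := by
  rw [xiFun, ← Real.rpow_natCast (_ ^ _) 3, ← Real.rpow_mul (two_mul_add_sqrt_pos u).le]
  norm_num

lemma xiFun_pow_three_sub_inv (u : ℝ) : xiFun u ^ 3 - 1 / xiFun u ^ 3 = 4 * u := by
  have hsqrt : Real.sqrt (4 * u ^ 2 + 1) ^ 2 = 4 * u ^ 2 + 1 := Real.sq_sqrt (by positivity)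
  have hinv : xiFun u ^ 3 * (Real.sqrt (4 * u ^ 2 + 1) - 2 * u) = 1 := by
    rw [xiFun_pow_three]; linear_combination hsqrt
  field_simp [(xiFun_pos u).ne']
  linear_combination xiFun u ^ 3 * xiFun_pow_three u + hinv

lemma sub_inv_pow_three_add {K : Type*} [Field K] {x : K} (hx : x ≠ 0) :
    (x - 1 / x) ^ 3 + 3 * (x - 1 / x) = x ^ 3 - 1 / x ^ 3 := by
  field_simp
  ring

lemma add_inv_eq_sqrt_sub_inv_sq_add_four {x : ℝ} (hx : 0 < x) :
    x + 1 / x = Real.sqrt ((x - 1 / x) ^ 2 + 4) := by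
  have h : (x - 1 / x) ^ 2 + 4 = (x + 1 / x) ^ 2 := by field_simp; ring
  rw [h, Real.sqrt_sq (by positivity)]

lemma sFun_pow_three_add (u : ℝ) : sFun u ^ 3 + 3 * sFun u = 4 * u := by
  rw [sFun, sub_inv_pow_three_add (xiFun_pos u).ne', xiFun_pow_three_sub_inv]

lemma strictMono_pow_three_add_three_mul : StrictMono fun t : ℝ => t ^ 3 + 3 * t := by
  intro a b hab
  nlinarith [sq_nonneg (a + b), sq_nonneg a, sq_nonneg b]

lemma sFun_eq_iff {u v : ℝ} : sFun u = v ↔ v ^ 3 + 3 * v = 4 * u := by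
  rw [← sFun_pow_three_add u]
  exact ⟨fun h => h ▸ rfl, fun h => strictMono_pow_three_add_three_mul.injective h.symm⟩

lemma sFun_strictMono : StrictMono sFun := fun a b hab =>
  strictMono_pow_three_add_three_mul.lt_iff_lt.mp <| by
    simp only [sFun_pow_three_add]; linarith

lemma sFun_neg_one : sFun (-1) = -1 := sFun_eq_iff.mpr (by norm_num)

lemma sFun_one : sFun 1 = 1 := sFun_eq_iff.mpr (by norm_num)

lemma sFun_mem_Icc {u : ℝ} (hu : u ∈ Set.Icc (-1 : ℝ) 1) : sFun u ∈ Set.Icc (-1 : ℝ) 1 :=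
  ⟨sFun_neg_one ▸ sFun_strictMono.monotone hu.1, sFun_one ▸ sFun_strictMono.monotone hu.2⟩

lemma lambdaTwo_eq (u : ℝ) :
    2 * (u : ℂ) / 3 + (1 / 6 : ℂ) * ((-1 + I * (Real.sqrt 3 : ℂ)) * (xiFun u : ℂ) +
        (1 + I * (Real.sqrt 3 : ℂ)) / (xiFun u : ℂ)) =
      ((sFun u * (sFun u ^ 2 + 2) / 6 : ℝ) : ℂ) +
        I * ((Real.sqrt 3 / 6 * Real.sqrt (sFun u ^ 2 + 4) : ℝ) : ℂ) := by
  have hx := xiFun_pos u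
  have hre : 2 * u / 3 - sFun u / 6 = sFun u * (sFun u ^ 2 + 2) / 6 := by
    linear_combination (-1 / 6 : ℝ) * sFun_pow_three_add u
  have him : Real.sqrt 3 / 6 * (xiFun u + 1 / xiFun u) =
      Real.sqrt 3 / 6 * Real.sqrt (sFun u ^ 2 + 4) := by
    rw [add_inv_eq_sqrt_sub_inv_sq_add_four hx, sFun]
  rw [← hre, ← him, sFun]
  have hxC : (xiFun u : ℂ) ≠ 0 := by exact_mod_cast hx.ne'
  push_cast
  field_simp
  ring

lemma norm_lambdaTwo_le {s : ℝ} (hs : s ∈ Set.Icc (-1 : ℝ) 1) :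
    ‖((s * (s ^ 2 + 2) / 6 : ℝ) : ℂ) + I * ((Real.sqrt 3 / 6 * Real.sqrt (s ^ 2 + 4) : ℝ) : ℂ)‖ ≤
      Real.sqrt (2 / 3) := by
  rw [mul_comm I, norm_add_mul_I]
  apply Real.sqrt_le_sqrt
  have hs2 : s ^ 2 ≤ 1 := by nlinarith [hs.1, hs.2]
  rw [mul_pow, div_pow (Real.sqrt 3), Real.sq_sqrt (by norm_num : (0 : ℝ) ≤ 3),
    Real.sq_sqrt (by positivity : 0 ≤ s ^ 2 + 4)]
  nlinarith [sq_nonneg s, mul_nonneg (sq_nonneg s) (sub_nonneg.mpr hs2)]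

/-- Example 5, reparametrization of the eigenvalues: with `u = cos k`,
`ξ = (2u + √(4u²+1))^{1/3}` and `s = ξ - 1/ξ` one has `ξ³ - 1/ξ³ = 4u`; `s` is
increasing on `[-1,1]` with `s(-1) = -1`, `s(1) = 1`, so `s ∈ [-1,1]`; the
eigenvalues satisfy `λ₀ = s(s²+3)/6`, `λ₁ = s(s²+5)/6`,
`λ₂ = s(s²+2)/6 + i(√3/6)√(s²+4)`; and consequently `|λ₀| ≤ 2/3`,
`|λ₂| ≤ √(2/3)`. -/
theorem oqrw_example5_eigenvalues (k u : ℝ) (hu : u = Real.cos k) :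
    xiFun u ^ 3 - 1 / xiFun u ^ 3 = 4 * u ∧
    StrictMonoOn sFun (Set.Icc (-1 : ℝ) 1) ∧
    sFun (-1) = -1 ∧ sFun 1 = 1 ∧ sFun u ∈ Set.Icc (-1 : ℝ) 1 ∧
    2 * Real.cos k / 3 = sFun u * (sFun u ^ 2 + 3) / 6 ∧
    2 * Real.cos k / 3 + (xiFun u - 1 / xiFun u) / 3 = sFun u * (sFun u ^ 2 + 5) / 6 ∧
    (2 * (Real.cos k : ℂ) / 3 +
        (1 / 6 : ℂ) * ((-1 + Complex.I * (Real.sqrt 3 : ℂ)) * (xiFun u : ℂ) +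
          (1 + Complex.I * (Real.sqrt 3 : ℂ)) / (xiFun u : ℂ)) =
      ((sFun u * (sFun u ^ 2 + 2) / 6 : ℝ) : ℂ) +
        Complex.I * ((Real.sqrt 3 / 6 * Real.sqrt (sFun u ^ 2 + 4) : ℝ) : ℂ)) ∧
    |2 * Real.cos k / 3| ≤ 2 / 3 ∧
    ‖2 * (Real.cos k : ℂ) / 3 +
        (1 / 6 : ℂ) * ((-1 + Complex.I * (Real.sqrt 3 : ℂ)) * (xiFun u : ℂ) +
          (1 + Complex.I * (Real.sqrt 3 : ℂ)) / (xiFun u : ℂ))‖ ≤ Real.sqrt (2 / 3) := by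
  subst hu
  have hcube := sFun_pow_three_add (Real.cos k)
  have hmem := sFun_mem_Icc ⟨Real.neg_one_le_cos k, Real.cos_le_one k⟩
  refine ⟨xiFun_pow_three_sub_inv _, sFun_strictMono.strictMonoOn _, sFun_neg_one, sFun_one,
    hmem, by linear_combination -hcube / 6, by rw [← sFun]; linear_combination -hcube / 6,
    lambdaTwo_eq _, ?_, ?_⟩
  · rw [abs_div, abs_mul, abs_two, abs_of_pos (three_pos : (0 : ℝ) < 3)]
    linarith [Real.abs_cos_le_one k]
  · rw [lambdaTwo_eq]
    exact norm_lambdaTwo_le hmem
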